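/- Let M be an m×n integer matrix. Then the order of the torsion subgroup of the cokernel ℤ^m / im(M) is at most the product over all columns of M of max(1, the Euclidean length of that column). -/

import Mathlib

/-!
Choose rows `ρ` of `M` forming a basis of its row space over `ℚ`, and columns `γ` such that the
square minor `A = M[ρ, γ]` is nonsingular. Projecting `ℤ^m` onto the coordinates `ρ` maps the
torsion of `coker M` injectively into `coker M[ρ, ·]`, because `M` and `M[ρ, ·]` have the same
kernel. That cokernel is a quotient of `coker A`, which has `|det A|` elements, and Hadamard's
inequality bounds `|det A|` by the product of the lengths of the columns of `A`, which are
shortened columns of `M`.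
-/

open Matrix

theorem Fintype.sum_comp_le_sum_of_injective {ι κ M : Type*} [Fintype ι] [Fintype κ]
    [AddCommMonoid M] [PartialOrder M] [IsOrderedAddMonoid M] {e : ι → κ}
    (he : Function.Injective e) {f : κ → M} (hf : ∀ k, 0 ≤ f k) :
    ∑ i, f (e i) ≤ ∑ k, f k := by
  classical
  rw [← Finset.sum_image he.injOn]
  exact Finset.sum_le_sum_of_subset_of_nonneg (Finset.subset_univ _) fun k _ _ ↦ hf k

theorem Fintype.prod_comp_le_prod_of_injective {ι κ R : Type*} [Fintype ι] [Fintype κ]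
    [CommMonoidWithZero R] [Preorder R] [ZeroLEOneClass R] [PosMulMono R] {e : ι → κ}
    (he : Function.Injective e) {f : κ → R} (hf : ∀ k, 1 ≤ f k) :
    ∏ i, f (e i) ≤ ∏ k, f k := by
  classical
  rw [← Finset.prod_image he.injOn]
  exact Finset.prod_le_prod_of_subset_of_one_le (Finset.subset_univ _)
    (fun k _ ↦ zero_le_one.trans (hf k)) fun k _ _ ↦ hf k

theorem LinearMap.natCard_torsion_quotient_range_le {R M N P : Type*} [CommRing R]
    [AddCommGroup M] [Module R M] [Module.IsTorsionFree R M] [AddCommGroup N] [Module R N]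
    [AddCommGroup P] [Module R P] (f : N →ₗ[R] M) (π : M →ₗ[R] P)
    (hker : LinearMap.ker (π ∘ₗ f) ≤ LinearMap.ker f) [Finite (P ⧸ LinearMap.range (π ∘ₗ f))] :
    Nat.card (Submodule.torsion R (M ⧸ LinearMap.range f)) ≤
      Nat.card (P ⧸ LinearMap.range (π ∘ₗ f)) := by
  have hle : LinearMap.range f ≤ (LinearMap.range (π ∘ₗ f)).comap π := by
    rw [LinearMap.range_comp]; exact Submodule.le_comap_map π _
  set g := (LinearMap.range f).mapQ _ π hle ∘ₗ (Submodule.torsion R _).subtype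
  refine Nat.card_le_card_of_injective g ((injective_iff_map_eq_zero g).mpr ?_)
  rintro ⟨q, hq⟩ hgq
  obtain ⟨x, rfl⟩ := Submodule.Quotient.mk_surjective _ q
  obtain ⟨k, hk⟩ := (Submodule.mem_torsion_iff _).mp hq
  obtain ⟨y', hy'⟩ : k • x ∈ LinearMap.range f := by
    rwa [← Submodule.Quotient.mk_eq_zero, Submodule.Quotient.mk_smul]
  obtain ⟨y, hy⟩ : π x ∈ LinearMap.range (π ∘ₗ f) := (Submodule.Quotient.mk_eq_zero _).mp hgq
  -- `x - f y` is killed by `π` and `k • (x - f y)` lies in the range of `f`, hence vanishes.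
  have hz : y' - (k : R) • y ∈ LinearMap.ker f := hker <| by
    simp only [LinearMap.mem_ker, LinearMap.comp_apply, map_sub, map_smul, hy'] at hy ⊢
    rw [hy, Submonoid.smul_def, map_smul, sub_self]
  have hkx : (k : R) • (x - f y) = 0 := by
    rw [LinearMap.mem_ker, map_sub, map_smul, ← Submonoid.smul_def, hy'] at hz
    rwa [smul_sub]
  rw [(isRegular_iff_mem_nonZeroDivisors.mpr k.2).smul_eq_zero_iff_right, sub_eq_zero] at hkx
  simp only [hkx, Submodule.mk_eq_zero, Submodule.Quotient.mk_eq_zero]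
  exact ⟨y, rfl⟩

namespace Matrix

theorem natCard_quotient_range_mulVecLin {ι : Type*} [Fintype ι] [DecidableEq ι]
    (A : Matrix ι ι ℤ) (hA : A.det ≠ 0) :
    Nat.card ((ι → ℤ) ⧸ LinearMap.range A.mulVecLin) = A.det.natAbs := by
  let e := LinearEquiv.ofInjective A.mulVecLin (mulVec_injective_of_det_ne_zero hA)
  rw [← Submodule.natAbs_det_equiv _ e, ← LinearMap.det_toLin' A]
  rfl

theorem range_mulVecLin_submatrix_le {R m n k : Type*} [CommSemiring R] [Fintype n]
    [Fintype k] (A : Matrix m n R) (γ : k → n) :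
    LinearMap.range (A.submatrix id γ).mulVecLin ≤ LinearMap.range A.mulVecLin := by
  rw [range_mulVecLin, range_mulVecLin]
  exact Submodule.span_mono (Set.range_comp_subset_range γ A.col)

theorem mulVec_eq_zero_of_span_row_submatrix_eq {K m n k : Type*} [Field K] [Fintype n]
    (M : Matrix m n K) (ρ : k → m)
    (hρ : Submodule.span K (Set.range (M.row ∘ ρ)) = Submodule.span K (Set.range M.row))
    {y : n → K} (hy : M.submatrix ρ id *ᵥ y = 0) : M *ᵥ y = 0 := by
  have hspan :
      Submodule.span K (Set.range M.row) ≤ LinearMap.ker ((dotProductBilin K K).flip y) := by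
    rw [← hρ, Submodule.span_le]
    rintro _ ⟨i, rfl⟩
    exact congrFun hy i
  funext i
  exact hspan (Submodule.subset_span ⟨i, rfl⟩)

theorem exists_submatrix_det_ne_zero_and_ker_le {K m n : Type*} [Field K] [Fintype m]
    [Fintype n] (M : Matrix m n K) :
    ∃ (r : ℕ) (ρ : Fin r → m) (γ : Fin r → n), Function.Injective ρ ∧ Function.Injective γ ∧
      (M.submatrix ρ γ).det ≠ 0 ∧
        LinearMap.ker (M.submatrix ρ id).mulVecLin ≤ LinearMap.ker M.mulVecLin := by
  obtain ⟨κ, a, ha, hspan, hind⟩ := exists_linearIndependent' K M.row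
  have := Fintype.ofInjective a ha
  let e := (Fintype.equivFin κ).symm
  have hrank : (M.submatrix (a ∘ e) id).rank = Fintype.card κ :=
    (hind.comp e e.injective).rank_matrix.trans (Fintype.card_fin _)
  obtain ⟨κ', a', ha', hspan', hind'⟩ := exists_linearIndependent' K (M.submatrix (a ∘ e) id).col
  have := Fintype.ofInjective a' ha'
  have hcard : Fintype.card κ' = Fintype.card κ := by
    rw [← hrank, rank_eq_finrank_span_cols, ← hspan',
      linearIndependent_iff_card_eq_finrank_span.mp hind']
    rfl
  let e' := (Fintype.equivFinOfCardEq hcard).symm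
  refine ⟨_, a ∘ e, a' ∘ e', ha.comp e.injective, ha'.comp e'.injective, ?_, fun y hy ↦ ?_⟩
  · rw [← isUnit_iff_ne_zero, ← isUnit_iff_isUnit_det, ← linearIndependent_cols_iff_isUnit]
    exact hind'.comp e' e'.injective
  · refine M.mulVec_eq_zero_of_span_row_submatrix_eq _ ?_ hy
    rw [← hspan, ← Function.comp_assoc, EquivLike.range_comp]

theorem exists_submatrix_det_ne_zero_and_ker_le_of_isDomain {R m n : Type*} [CommRing R]
    [IsDomain R] [Fintype m] [Fintype n] (M : Matrix m n R) :
    ∃ (r : ℕ) (ρ : Fin r → m) (γ : Fin r → n), Function.Injective ρ ∧ Function.Injective γ ∧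
      (M.submatrix ρ γ).det ≠ 0 ∧
        LinearMap.ker (M.submatrix ρ id).mulVecLin ≤ LinearMap.ker M.mulVecLin := by
  let φ := algebraMap R (FractionRing R)
  have hφ : Function.Injective φ := IsFractionRing.injective R _
  obtain ⟨r, ρ, γ, hρ, hγ, hdet, hker⟩ := (M.map φ).exists_submatrix_det_ne_zero_and_ker_le
  refine ⟨r, ρ, γ, hρ, hγ, fun h ↦ hdet ?_, fun y hy ↦ ?_⟩
  · rw [submatrix_map, ← RingHom.mapMatrix_apply, ← RingHom.map_det, h, map_zero]
  · rw [LinearMap.mem_ker, mulVecLin_apply] at hy ⊢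
    have hyφ : (M.map φ).submatrix ρ id *ᵥ (φ ∘ y) = 0 := by
      funext i; rw [submatrix_map, ← RingHom.map_mulVec, hy]; simp
    funext i
    apply hφ
    rw [RingHom.map_mulVec, show M.map φ *ᵥ (φ ∘ y) = 0 from hker hyφ]; simp

theorem abs_det_le_prod_sqrt_sum_sq {r : ℕ} (A : Matrix (Fin r) (Fin r) ℝ) :
    |A.det| ≤ ∏ j, √(∑ i, A i j ^ 2) := by
  have : Fact (Module.finrank ℝ (EuclideanSpace ℝ (Fin r)) = r) := ⟨finrank_euclideanSpace_fin⟩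
  let b := EuclideanSpace.basisFun (Fin r) ℝ
  let v j : EuclideanSpace ℝ (Fin r) := WithLp.toLp 2 (A.col j)
  have hdet : b.toBasis.det v = A.det := by
    rw [Module.Basis.det_apply]; rfl
  calc |A.det| = |b.toBasis.orientation.volumeForm v| := by
        rw [b.toBasis.orientation.volumeForm_robust' b v, hdet]
    _ ≤ ∏ j, ‖v j‖ := b.toBasis.orientation.abs_volumeForm_apply_le v
    _ = ∏ j, √(∑ i, A i j ^ 2) := by simp [v, EuclideanSpace.norm_eq]

theorem abs_det_submatrix_le_prod_max_one_sqrt_sum_sq {m n : Type*} [Fintype m] [Fintype n]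
    (M : Matrix m n ℝ) {r : ℕ} {ρ : Fin r → m} {γ : Fin r → n} (hρ : Function.Injective ρ)
    (hγ : Function.Injective γ) :
    |(M.submatrix ρ γ).det| ≤ ∏ j, max 1 √(∑ i, M i j ^ 2) :=
  calc |(M.submatrix ρ γ).det| ≤ ∏ j, √(∑ i, M (ρ i) (γ j) ^ 2) :=
        abs_det_le_prod_sqrt_sum_sq _
    _ ≤ ∏ j, max 1 √(∑ i, M i (γ j) ^ 2) := by
      gcongr with j
      exact le_max_of_le_right <| Real.sqrt_le_sqrt <|
        Fintype.sum_comp_le_sum_of_injective hρ (f := fun i ↦ M i (γ j) ^ 2) fun _ ↦ sq_nonneg _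
    _ ≤ _ := Fintype.prod_comp_le_prod_of_injective hγ
      (f := fun j ↦ max 1 √(∑ i, M i j ^ 2)) fun _ ↦ le_max_left _ _

end Matrix

/-- For an `m × n` integer matrix `M`, the order of the torsion subgroup of
the cokernel `ℤ^m / im(M)` is at most the product over the columns of `M` of
`max 1 (Euclidean length of the column)`. -/
theorem torsion_cokernel_le_prod_column_lengths (m n : ℕ) (M : Matrix (Fin m) (Fin n) ℤ) :
    (Nat.card ↥(Submodule.torsion ℤ ((Fin m → ℤ) ⧸ LinearMap.range M.mulVecLin)) : ℝ) ≤
      ∏ j : Fin n, max 1 (Real.sqrt (∑ i : Fin m, ((M i j : ℝ)) ^ 2)) := by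
  obtain ⟨r, ρ, γ, hρ, hγ, hdet, hker⟩ := M.exists_submatrix_det_ne_zero_and_ker_le_of_isDomain
  set A := M.submatrix ρ γ
  have hle : LinearMap.range A.mulVecLin ≤ LinearMap.range (M.submatrix ρ id).mulVecLin :=
    (M.submatrix ρ id).range_mulVecLin_submatrix_le γ
  have hA := A.natCard_quotient_range_mulVecLin hdet
  have : Finite ((Fin r → ℤ) ⧸ LinearMap.range A.mulVecLin) :=
    Nat.finite_of_card_ne_zero (by simpa [hA] using hdet)
  -- restricting `M *ᵥ y` to the coordinates `ρ` is, definitionally, `M.submatrix ρ id *ᵥ y`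
  have : Finite ((Fin r → ℤ) ⧸ LinearMap.range (LinearMap.funLeft ℤ ℤ ρ ∘ₗ M.mulVecLin)) :=
    Finite.of_surjective _ (Submodule.factor_surjective hle)
  have hcard : Nat.card (Submodule.torsion ℤ ((Fin m → ℤ) ⧸ LinearMap.range M.mulVecLin)) ≤
      A.det.natAbs := calc
    _ ≤ Nat.card ((Fin r → ℤ) ⧸ LinearMap.range (M.submatrix ρ id).mulVecLin) :=
      M.mulVecLin.natCard_torsion_quotient_range_le (LinearMap.funLeft ℤ ℤ ρ) hker
    _ ≤ Nat.card ((Fin r → ℤ) ⧸ LinearMap.range A.mulVecLin) :=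
      Nat.card_le_card_of_surjective _ (Submodule.factor_surjective hle)
    _ = A.det.natAbs := hA
  calc (Nat.card (Submodule.torsion ℤ ((Fin m → ℤ) ⧸ LinearMap.range M.mulVecLin)) : ℝ)
      ≤ |((A.det : ℤ) : ℝ)| := by rw [← Int.cast_abs, ← Nat.cast_natAbs]; exact_mod_cast hcard
    _ = |((M.map ((↑) : ℤ → ℝ)).submatrix ρ γ).det| := by rw [Int.cast_det, submatrix_map]
    _ ≤ _ := (M.map ((↑) : ℤ → ℝ)).abs_det_submatrix_le_prod_max_one_sqrt_sum_sq hρ hγ
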